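/- arXiv:2002.00290 — 3 statements merged into one kernel-verified Lean document; each statement's English description precedes it below -/
import Mathlib

section
/- Let k be a field and let A be a nonzero finite-dimensional k-algebra with identity. Let V be a nonzero finite-dimensional k-vector space equipped with a faithful A-module structure compatible with the k-structure (i.e., the A-action is k-linear and scalars from k act through A), such that V is a semisimple A-module and every simple A-submodule M of V is absolutely simple, meaning that every A-linear endomorphism of M is scalar multiplication by an element of k. Then A is isomorphic, as a k-algebra, to a finite direct product of matrix algebras over k: there exist a natural number s and positive integers d₁, …, d_s and a k-algebra isomorphism from A onto ∏_{i=1}^s Mat_{d_i}(k). -/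
/-!
Evaluating at a `k`-spanning family `v₁, …, vₙ` of `V` embeds `A` into `Vⁿ` (faithfulness), so
`A` is a semisimple ring, and Wedderburn–Artin gives `A ≃ ∏ᵢ Mat_{dᵢ}(End_A(Sᵢ)ᵐᵒᵖ)` for simple
left ideals `Sᵢ`. Any `s ≠ 0` in `Sᵢ` moves some `v ∈ V`, so `Sᵢ ≅ Sᵢ • v ⊆ V`; absolute
simplicity of that submodule then says `End_A(Sᵢ) = k`.
-/

open Module

theorem IsSemisimpleRing.of_faithfulSMul (k A V : Type*) [CommSemiring k] [Ring A] [Algebra k A]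
    [AddCommGroup V] [Module k V] [Module.Finite k V] [Module A V] [IsScalarTower k A V]
    [FaithfulSMul A V] [IsSemisimpleModule A V] : IsSemisimpleRing A := by
  obtain ⟨s, hs⟩ := Module.Finite.fg_top (R := k) (M := V)
  let f : A →ₗ[A] (s → V) := LinearMap.pi fun v ↦ LinearMap.toSpanSingleton A V v
  refine IsSemisimpleModule.of_injective f fun a b hab ↦
    FaithfulSMul.eq_of_smul_eq_smul (α := V) fun v ↦ ?_
  induction hs.ge (Submodule.mem_top (x := v)) using Submodule.span_induction with
  | mem v hv => exact congr_fun hab ⟨v, hv⟩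
  | zero => simp
  | add _ _ _ _ h₁ h₂ => simp only [smul_add, h₁, h₂]
  | smul _ _ _ h => rw [smul_comm a, smul_comm b, h]

theorem Ideal.exists_submodule_linearEquiv_of_faithfulSMul {A : Type*} (V : Type*) [Ring A]
    [AddCommGroup V] [Module A V] [FaithfulSMul A V] (I : Ideal A) [IsSimpleModule A I] :
    ∃ M : Submodule A V, Nonempty (I ≃ₗ[A] M) := by
  have := IsSimpleModule.nontrivial A I
  obtain ⟨x, hx⟩ := exists_ne (0 : I)
  obtain ⟨v, hv⟩ : ∃ v : V, (x : A) • v ≠ 0 := by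
    by_contra! h
    exact hx (Subtype.ext (FaithfulSMul.eq_of_smul_eq_smul (α := V) fun v ↦ by simp [h v]))
  let f := LinearMap.toSpanSingleton A V v ∘ₗ I.subtype
  have hf : Function.Injective f :=
    f.injective_or_eq_zero.resolve_right fun h ↦ hv (by simpa [f] using LinearMap.congr_fun h x)
  exact ⟨LinearMap.range f, ⟨LinearEquiv.ofInjective f hf⟩⟩

namespace Module.End

theorem algebraMap_bijective_congr (k : Type*) {A M N : Type*} [CommSemiring k] [Semiring A]
    [Algebra k A] [AddCommMonoid M] [AddCommMonoid N] [Module k M] [Module A M]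
    [IsScalarTower k A M] [Module k N] [Module A N] [IsScalarTower k A N] (e : M ≃ₗ[A] N) :
    Function.Bijective (algebraMap k (End A M)) ↔ Function.Bijective (algebraMap k (End A N)) := by
  rw [← (e.conjAlgEquiv k).toAlgHom.comp_algebraMap]
  exact (Function.Bijective.of_comp_iff' (e.conjAlgEquiv k).bijective _).symm

theorem algebraMap_bijective_of_forall_eq_smul (k A M : Type*) [Field k] [Semiring A]
    [Algebra k A] [AddCommMonoid M] [Nontrivial M] [Module k M] [Module A M]
    [IsScalarTower k A M] (h : ∀ φ : End A M, ∃ c : k, ∀ x, φ x = c • x) :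
    Function.Bijective (algebraMap k (End A M)) :=
  ⟨(algebraMap k _).injective, fun φ ↦ (h φ).imp fun _ hc ↦ LinearMap.ext fun x ↦ (hc x).symm⟩

end Module.End

theorem isomorphic_to_product_of_matrix_algebras_of_faithful_semisimple_absolutely_simple_general
    (k : Type) [Field k]
    (A : Type) [Ring A] [Algebra k A]
    (V : Type) [AddCommGroup V] [Module k V] [FiniteDimensional k V]
    [Module A V] [IsScalarTower k A V] [FaithfulSMul A V] [IsSemisimpleModule A V]
    (habs : ∀ M : Submodule A V, IsSimpleModule A M →
      ∀ φ : M →ₗ[A] M, ∃ c : k, ∀ x : M, φ x = algebraMap k A c • x) :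
    ∃ (s : ℕ) (d : Fin s → ℕ), (∀ i, 0 < d i) ∧
      Nonempty (A ≃ₐ[k] ((i : Fin s) → Matrix (Fin (d i)) (Fin (d i)) k)) := by
  have := IsSemisimpleRing.of_faithfulSMul k A V
  obtain ⟨n, S, d, hS, hd, ⟨e⟩⟩ := IsSemisimpleRing.exists_algEquiv_pi_matrix_end_mulOpposite k A
  have hk (i : Fin n) : Function.Bijective (algebraMap k (End A (S i))) := by
    obtain ⟨M, ⟨f⟩⟩ := (S i).exists_submodule_linearEquiv_of_faithfulSMul V
    have hM : IsSimpleModule A M := .congr f.symm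
    have := IsSimpleModule.nontrivial A M
    rw [End.algebraMap_bijective_congr k f]
    exact End.algebraMap_bijective_of_forall_eq_smul k A M fun φ ↦
      (habs M hM φ).imp fun c hc x ↦ by rw [hc, algebraMap_smul]
  exact ⟨n, d, fun i ↦ Nat.pos_of_neZero _, ⟨e.trans <| .piCongrRight fun i ↦ .mapMatrix <| .symm <|
    .ofBijective (Algebra.ofId k _) (MulOpposite.opEquiv.bijective.comp (hk i))⟩⟩

/-- **Lemma (dense).** Let `k` be a field and `A` a nonzero finite-dimensional `k`-algebra.
Let `V` be a nonzero finite-dimensional `k`-vector space with a faithful `A`-module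
structure compatible with the `k`-structure, such that `V` is a semisimple `A`-module and
every simple `A`-submodule `M` of `V` is absolutely simple (every `A`-linear endomorphism
of `M` is multiplication by a scalar from `k`). Then `A` is isomorphic, as a `k`-algebra,
to a finite direct product of matrix algebras over `k`. -/
theorem isomorphic_to_product_of_matrix_algebras_of_faithful_semisimple_absolutely_simple
    (k : Type) [Field k]
    (A : Type) [Ring A] [Nontrivial A] [Algebra k A] [FiniteDimensional k A]
    (V : Type) [AddCommGroup V] [Module k V] [Nontrivial V] [FiniteDimensional k V]
    [Module A V] [IsScalarTower k A V] [FaithfulSMul A V] [IsSemisimpleModule A V]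
    (habs : ∀ M : Submodule A V, IsSimpleModule A M →
      ∀ φ : M →ₗ[A] M, ∃ c : k, ∀ x : M, φ x = algebraMap k A c • x) :
    ∃ (s : ℕ) (d : Fin s → ℕ), (∀ i, 0 < d i) ∧
      Nonempty (A ≃ₐ[k] ((i : Fin s) → Matrix (Fin (d i)) (Fin (d i)) k)) :=
  isomorphic_to_product_of_matrix_algebras_of_faithful_semisimple_absolutely_simple_general k A V
    habs
end

section
/- Let k be a field of characteristic zero and let A be a finite-dimensional central simple k-algebra (a simple ring whose center is k·1_A). Then the k-linear span of all commutators ab − ba (for a, b ∈ A) equals the kernel of the k-linear map sending u ∈ A to the trace of the k-linear endomorphism of A given by left multiplication by u. -/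
/-!
A nonzero linear functional `f` on `A` with `f (x * y) = f (y * x)` gives the bilinear form
`(x, y) ↦ f (x * y)`, whose left kernel is a two-sided ideal, hence zero in a simple ring.
For this nondegenerate form, the orthogonal of the span of commutators consists of the `x`
with `f ((x * a - a * x) * y) = 0` for all `a, y`, i.e. of central elements; it is therefore
the line `k · 1`. So the commutators span a hyperplane inside `ker f`, which is `ker f` itself.
The trace of left multiplication is such a functional; it sends `1` to `dim A`, which is
nonzero in characteristic zero.
-/

open Module LinearMap

section Tracial

variable {k A : Type*} [CommRing k] [Ring A] [Algebra k A] {f : A →ₗ[k] k}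

theorem span_commutators_le_ker (hf : ∀ x y, f (x * y) = f (y * x)) :
    Submodule.span k {x : A | ∃ a b : A, x = a * b - b * a} ≤ ker f := by
  rw [Submodule.span_le]
  rintro _ ⟨a, b, rfl⟩
  simp [hf a b]

def tracialRadical (f : A →ₗ[k] k) (hf : ∀ x y, f (x * y) = f (y * x)) : TwoSidedIdeal A :=
  TwoSidedIdeal.mk' {x | ∀ y, f (x * y) = 0}
    (fun y => by simp)
    (fun ha hb y => by rw [add_mul, map_add, ha y, hb y, add_zero])
    (fun ha y => by rw [neg_mul, map_neg, ha y, neg_zero])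
    (fun {a b} hb y => by rw [mul_assoc, hf, mul_assoc]; exact hb (y * a))
    (fun {a b} ha y => by rw [mul_assoc]; exact ha (b * y))

theorem eq_zero_of_forall_apply_mul_eq_zero [IsSimpleRing A]
    (hf : ∀ x y, f (x * y) = f (y * x)) (hf₀ : f ≠ 0) {x : A} (hx : ∀ y, f (x * y) = 0) :
    x = 0 := by
  have hx' : x ∈ tracialRadical f hf := (TwoSidedIdeal.mem_mk' _ _ _ _ _ _ x).2 hx
  rcases IsSimpleRing.simple.eq_bot_or_eq_top (tracialRadical f hf) with h | h
  · rwa [h, TwoSidedIdeal.mem_bot] at hx'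
  · refine absurd (LinearMap.ext fun y => ?_) hf₀
    have h1 : (1 : A) ∈ tracialRadical f hf := h ▸ trivial
    simpa using (TwoSidedIdeal.mem_mk' _ _ _ _ _ _ (1 : A)).1 h1 y

theorem commute_of_forall_apply_commutator_mul [IsSimpleRing A]
    (hf : ∀ x y, f (x * y) = f (y * x)) (hf₀ : f ≠ 0) {x : A}
    (hx : ∀ a b, f ((a * b - b * a) * x) = 0) (a : A) : Commute a x := by
  refine (sub_eq_zero.mp (eq_zero_of_forall_apply_mul_eq_zero hf hf₀ fun y => ?_)).symm
  calc f ((x * a - a * x) * y) = f (x * (a * y)) - f (a * (x * y)) := by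
        rw [sub_mul, map_sub, mul_assoc, mul_assoc]
    _ = f ((a * y - y * a) * x) := by
        rw [sub_mul, map_sub, hf x, hf a, mul_assoc x, hf x]
    _ = 0 := hx a y

end Tracial

theorem span_commutators_eq_ker_of_tracial {k A : Type*} [Field k] [Ring A] [Algebra k A]
    [FiniteDimensional k A] [IsSimpleRing A] [Algebra.IsCentral k A] {f : A →ₗ[k] k}
    (hf : ∀ x y, f (x * y) = f (y * x)) (hf₀ : f ≠ 0) :
    Submodule.span k {x : A | ∃ a b : A, x = a * b - b * a} = ker f := by
  set C := Submodule.span k {x : A | ∃ a b : A, x = a * b - b * a}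
  let B : LinearMap.BilinForm k A := (LinearMap.mul k A).compr₂ f
  have hnd : B.Nondegenerate :=
    ⟨fun x hx => eq_zero_of_forall_apply_mul_eq_zero hf hf₀ hx,
      fun x hx => eq_zero_of_forall_apply_mul_eq_zero hf hf₀ fun y => (hf x y).trans (hx y)⟩
  have horth : B.orthogonal C ≤ Submodule.span k {1} := by
    intro x hx
    have hcenter : x ∈ Subalgebra.center k A := Subalgebra.mem_center_iff.2 fun a =>
      commute_of_forall_apply_commutator_mul hf hf₀
        (fun a b => hx _ (Submodule.subset_span ⟨a, b, rfl⟩)) a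
    obtain ⟨r, rfl⟩ := Algebra.mem_bot.1 (Algebra.IsCentral.out hcenter)
    rw [Algebra.algebraMap_eq_smul_one]
    exact Submodule.smul_mem _ _ (Submodule.mem_span_singleton_self _)
  have horth_le : finrank k (B.orthogonal C) ≤ 1 :=
    (Submodule.finrank_mono horth).trans (finrank_span_singleton one_ne_zero).le
  have hker_lt : finrank k (ker f) < finrank k A :=
    Submodule.finrank_lt fun h => hf₀ (ker_eq_top.1 h)
  refine Submodule.eq_of_le_of_finrank_le (span_commutators_le_ker hf) ?_
  have hC_orth := LinearMap.BilinForm.finrank_orthogonal hnd C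
  have hC_le := Submodule.finrank_le C
  omega

theorem trace_mulLeft_mul_comm {k A : Type*} [CommRing k] [Ring A] [Algebra k A] (x y : A) :
    trace k A (LinearMap.mul k A (x * y)) = trace k A (LinearMap.mul k A (y * x)) := by
  rw [← Algebra.coe_lmul_eq_mul, map_mul (Algebra.lmul k A), map_mul (Algebra.lmul k A),
    trace_mul_comm]

/-- For a finite-dimensional central simple algebra `A` over a field `k` of characteristic
zero, the `k`-linear span of all commutators `a * b - b * a` coincides with the kernel of
the `k`-linear map sending `u : A` to the trace of left multiplication by `u` on `A`. -/
theorem span_commutators_eq_ker_trace_mulLeft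
    (k : Type) [Field k] [CharZero k]
    (A : Type) [Ring A] [Algebra k A] [FiniteDimensional k A]
    [IsSimpleRing A] [Algebra.IsCentral k A] :
    Submodule.span k {x : A | ∃ a b : A, x = a * b - b * a} =
      LinearMap.ker ((LinearMap.trace k A) ∘ₗ (LinearMap.mul k A)) := by
  refine span_commutators_eq_ker_of_tracial trace_mulLeft_mul_comm fun h => ?_
  have h1 : trace k A (LinearMap.mul k A 1) = finrank k A := by
    rw [← Algebra.coe_lmul_eq_mul, map_one, Module.End.one_eq_id, trace_id]
  exact Nat.cast_ne_zero.2 finrank_pos.ne' (h1 ▸ LinearMap.congr_fun h 1)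
end

section
/- Let k be a field of characteristic zero and let A be a finite-dimensional central simple k-algebra (a simple ring whose center is k·1_A). Then A decomposes as an internal direct sum of k-vector subspaces A = k·1_A ⊕ [A,A], where [A,A] is the k-linear span of all commutators ab − ba; i.e., the submodule k·1_A and the span of commutators are complementary (their intersection is zero and their sum is all of A). -/
set_option linter.unusedSectionVars false

section
variable {k : Type} [Field k] [CharZero k]
    {A : Type} [Ring A] [Algebra k A] [FiniteDimensional k A]
    [IsSimpleRing A] [Algebra.IsCentral k A]

noncomputable def trA (k A : Type) [Field k] [Ring A] [Algebra k A] : A →ₗ[k] k :=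
  (LinearMap.trace k A).comp (LinearMap.mul k A)

lemma trA_mul_comm (a b : A) : trA k A (a * b) = trA k A (b * a) := by
  have h : ∀ x y : A, LinearMap.mul k A (x * y) = LinearMap.mul k A x * LinearMap.mul k A y := by
    intro x y; ext z; simp [mul_assoc]
  simp only [trA, LinearMap.comp_apply, h, LinearMap.trace_mul_comm]

lemma trA_one : trA k A 1 = (Module.finrank k A : k) := by
  have : LinearMap.mul k A 1 = 1 := by ext z; simp
  simp [trA, this, LinearMap.trace_one]

lemma trA_rad (x : A) (hx : ∀ y : A, trA k A (x * y) = 0) : x = 0 := by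
  have : Nontrivial A := inferInstance
  set I : TwoSidedIdeal A := TwoSidedIdeal.mk' {z : A | ∀ y, trA k A (z * y) = 0}
    (by intro y; simp)
    (fun {a b} ha hb y => by rw [add_mul, map_add, ha y, hb y, add_zero])
    (fun {a} ha y => by rw [neg_mul, map_neg, ha y, neg_zero])
    (fun {a b} hb y => by rw [mul_assoc, trA_mul_comm, mul_assoc]; exact hb _)
    (fun {a b} ha y => by rw [mul_assoc]; exact ha _) with hI
  have h1 : (1 : A) ∉ I := by
    rw [hI, TwoSidedIdeal.mem_mk']
    intro h
    have := h 1
    rw [one_mul, trA_one] at this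
    exact (Nat.cast_ne_zero.mpr (Module.finrank_pos (R := k) (M := A)).ne') this
  rcases IsSimpleRing.simple.eq_bot_or_eq_top I with hB | hT
  · have hxI : x ∈ I := by rw [hI, TwoSidedIdeal.mem_mk']; exact hx
    rwa [hB, TwoSidedIdeal.mem_bot] at hxI
  · exact absurd (hT ▸ TwoSidedIdeal.mem_top A) h1

end

/-- For a finite-dimensional central simple algebra `A` over a field `k` of characteristic
zero, `A` decomposes as an internal direct sum of the line `k • 1` and the `k`-linear span
`[A, A]` of all commutators `a * b - b * a`. -/
theorem isCompl_span_one_span_commutators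
    (k : Type) [Field k] [CharZero k]
    (A : Type) [Ring A] [Algebra k A] [FiniteDimensional k A]
    [IsSimpleRing A] [Algebra.IsCentral k A] :
    IsCompl (k ∙ (1 : A)) (Submodule.span k {x : A | ∃ a b : A, x = a * b - b * a}) := by
  classical
  set T := Submodule.span k {x : A | ∃ a b : A, x = a * b - b * a} with hT
  have : Nontrivial A := inferInstance
  have hn : ((Module.finrank k A : k)) ≠ 0 :=
    Nat.cast_ne_zero.mpr (Module.finrank_pos (R := k) (M := A)).ne'
  have hTker : T ≤ LinearMap.ker (trA k A) := by
    rw [hT, Submodule.span_le]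
    rintro x ⟨a, b, rfl⟩
    simp [LinearMap.mem_ker, map_sub, trA_mul_comm a b]
  have hdisj : Disjoint (k ∙ (1 : A)) T := by
    rw [Submodule.disjoint_def]
    intro x hx1 hxT
    obtain ⟨c, rfl⟩ := Submodule.mem_span_singleton.mp hx1
    have h0 := hTker hxT
    rw [LinearMap.mem_ker, map_smul, trA_one, smul_eq_mul] at h0
    rcases mul_eq_zero.mp h0 with h | h
    · simp [h]
    · exact absurd h hn
  -- the trace pairing
  set φ : A →ₗ[k] Module.Dual k A := (LinearMap.mul k A).compr₂ (trA k A) with hφ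
  have hφapp : ∀ x y : A, φ x y = trA k A (x * y) := fun x y => rfl
  have hφinj : Function.Injective φ := by
    rw [← LinearMap.ker_eq_bot, Submodule.eq_bot_iff]
    intro x hx
    refine trA_rad (k := k) x fun y => ?_
    have := LinearMap.congr_fun (LinearMap.mem_ker.mp hx) y
    simpa [hφapp] using this
  have hφsurj : Function.Surjective φ :=
    (LinearMap.injective_iff_surjective_of_finrank_eq_finrank
      (Subspace.dual_finrank_eq (K := k) (V := A)).symm).mp hφinj
  -- dual annihilator of T is contained in φ '' (k ∙ 1)
  have hann : T.dualAnnihilator ≤ Submodule.map φ (k ∙ (1 : A)) := by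
    intro f hf
    obtain ⟨x, rfl⟩ := hφsurj f
    rw [Submodule.mem_dualAnnihilator] at hf
    have hcomm : ∀ a : A, x * a - a * x = 0 := by
      intro a
      refine trA_rad (k := k) _ fun b => ?_
      have h1 : trA k A (x * (a * b)) = φ x (a * b) := rfl
      have h2 : trA k A (a * (x * b)) = trA k A ((x * b) * a) := trA_mul_comm _ _
      calc trA k A ((x * a - a * x) * b)
          = trA k A (x * (a * b)) - trA k A (x * (b * a)) := by
            rw [sub_mul, map_sub, mul_assoc, mul_assoc, trA_mul_comm a, mul_assoc]
        _ = φ x (a * b - b * a) := by rw [map_sub]; rfl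
        _ = 0 := hf _ (Submodule.subset_span ⟨a, b, rfl⟩)
    have hxc : x ∈ Subalgebra.center k A := by
      rw [Subalgebra.mem_center_iff]
      intro a
      have h := hcomm a
      rw [sub_eq_zero] at h
      exact h.symm
    have hx1 : x ∈ (k ∙ (1 : A)) := by
      obtain ⟨c, hc⟩ := Algebra.mem_bot.mp ((Algebra.IsCentral.out : Subalgebra.center k A ≤ ⊥) hxc)
      exact Submodule.mem_span_singleton.mpr ⟨c, by rw [← hc, Algebra.algebraMap_eq_smul_one]⟩
    exact Submodule.mem_map_of_mem hx1
  -- finrank computations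
  have h1 : Module.finrank k (k ∙ (1 : A)) = 1 := finrank_span_singleton one_ne_zero
  have hannle : Module.finrank k T.dualAnnihilator ≤ 1 := by
    calc Module.finrank k T.dualAnnihilator
        ≤ Module.finrank k (Submodule.map φ (k ∙ (1 : A))) := Submodule.finrank_mono hann
      _ ≤ Module.finrank k (k ∙ (1 : A)) := Submodule.finrank_map_le _ _
      _ = 1 := h1
  have hquot : Module.finrank k (A ⧸ T) ≤ 1 := by
    have he : Module.finrank k (A ⧸ T) = Module.finrank k T.dualAnnihilator :=
      LinearEquiv.finrank_eq (Subspace.quotEquivAnnihilator T)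
    omega
  have hTfin : Module.finrank k A ≤ Module.finrank k T + 1 := by
    have := Submodule.finrank_quotient_add_finrank T
    omega
  have hsup : Module.finrank k ↥((k ∙ (1 : A)) ⊔ T) = Module.finrank k A := by
    have hkey := Submodule.finrank_sup_add_finrank_inf_eq (k ∙ (1 : A)) T
    rw [hdisj.eq_bot, finrank_bot, add_zero, h1] at hkey
    have hle : Module.finrank k ↥((k ∙ (1 : A)) ⊔ T) ≤ Module.finrank k A :=
      Submodule.finrank_le _
    omega
  exact ⟨hdisj, codisjoint_iff.mpr (Submodule.eq_top_of_finrank_eq hsup)⟩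
end
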